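/- Let Λ be a finitely aligned P-graph and T the filter representation on ℓ²(Λ̂). Then for all ν, ξ ∈ Λ: T_ν T_ν* T_ξ T_ξ* = Σ_{λ ∈ MCE(ν,ξ)} T_λ T_λ*. -/

import Mathlib

universe u

/-- A quasi-lattice ordered group in the sense of Nica: a (discrete) group `G` together
with a subsemigroup `P` containing the identity with `P ∩ P⁻¹ = {1}`, such that under the
partial order `p ≤ q ↔ p⁻¹ * q ∈ P`, any pair of elements of `G` with a common upper bound
in `P` has a least common upper bound in `P`. -/
structure QLOGroup (G : Type u) [Group G] where
  P : Set G
  one_mem : (1 : G) ∈ P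
  mul_mem : ∀ {p q : G}, p ∈ P → q ∈ P → p * q ∈ P
  eq_one_of_mem_inv_mem : ∀ p : G, p ∈ P → p⁻¹ ∈ P → p = 1
  lub_exists : ∀ p q : G, (∃ r ∈ P, p⁻¹ * r ∈ P ∧ q⁻¹ * r ∈ P) →
    ∃ r ∈ P, p⁻¹ * r ∈ P ∧ q⁻¹ * r ∈ P ∧
      ∀ s ∈ P, p⁻¹ * s ∈ P → q⁻¹ * s ∈ P → r⁻¹ * s ∈ P

namespace QLOGroup

variable {G : Type u} [Group G]

/-- The left-invariant partial order on `G` induced by `P`. -/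
def le (Q : QLOGroup G) (p q : G) : Prop := p⁻¹ * q ∈ Q.P

/-- `s` is the least common upper bound in `P` of `p` and `q` (i.e. `s = p ∨ q < ∞`). -/
def IsLub (Q : QLOGroup G) (p q s : G) : Prop :=
  s ∈ Q.P ∧ Q.le p s ∧ Q.le q s ∧ ∀ t ∈ Q.P, Q.le p t → Q.le q t → Q.le s t

/-- `s` is the least upper bound in `P` of the set `A` (i.e. `s = ∨A < ∞`). -/
def IsLubSet (Q : QLOGroup G) (A : Set G) (s : G) : Prop :=
  s ∈ Q.P ∧ (∀ a ∈ A, Q.le a s) ∧ ∀ t ∈ Q.P, (∀ a ∈ A, Q.le a t) → Q.le s t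

/-- `p` and `q` have a common upper bound in `P` (i.e. `p ∨ q < ∞`). -/
def HasLub (Q : QLOGroup G) (p q : G) : Prop := ∃ s, Q.IsLub p q s

/-- A subset `F` is `∨`-closed if whenever `p, q ∈ F` have `p ∨ q < ∞`, then `p ∨ q ∈ F`. -/
def VeeClosed (Q : QLOGroup G) (F : Set G) : Prop :=
  ∀ p ∈ F, ∀ q ∈ F, ∀ s, Q.IsLub p q s → s ∈ F

/-- `F̄ = {∨A : A ⊆ F, A ≠ ∅, ∨A ≠ ∞}`. -/
def veeClosure (Q : QLOGroup G) (F : Set G) : Set G :=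
  {s | ∃ A ⊆ F, A.Nonempty ∧ Q.IsLubSet A s}

end QLOGroup

/-- A `P`-graph for a quasi-lattice ordered group `(G,P)`: a countable category with a
degree functor `d` into `P` satisfying the unique factorisation property.  Composition is
written in the path order of Raeburn-Sims: `comp μ ν` is defined when `s(μ) = r(ν)` (with
`src = s = dom` and `tgt = r = cod`), and `comp` is a total function whose axioms are only
imposed on composable pairs. -/
structure PGraph {G : Type u} [Group G] (Q : QLOGroup G) where
  Obj : Type
  Mor : Type
  countable_mor : Countable Mor
  src : Mor → Obj
  tgt : Mor → Obj
  ident : Obj → Mor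
  comp : Mor → Mor → Mor
  src_ident : ∀ v, src (ident v) = v
  tgt_ident : ∀ v, tgt (ident v) = v
  src_comp : ∀ μ ν, src μ = tgt ν → src (comp μ ν) = src ν
  tgt_comp : ∀ μ ν, src μ = tgt ν → tgt (comp μ ν) = tgt μ
  id_comp : ∀ μ, comp (ident (tgt μ)) μ = μ
  comp_id : ∀ μ, comp μ (ident (src μ)) = μ
  comp_assoc : ∀ μ ν ρ, src μ = tgt ν → src ν = tgt ρ →
    comp (comp μ ν) ρ = comp μ (comp ν ρ)
  d : Mor → G
  d_mem : ∀ μ, d μ ∈ Q.P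
  d_ident : ∀ v, d (ident v) = 1
  d_comp : ∀ μ ν, src μ = tgt ν → d (comp μ ν) = d μ * d ν
  factorisation : ∀ (lam : Mor) (p q : G), p ∈ Q.P → q ∈ Q.P → d lam = p * q →
    ∃! mn : Mor × Mor, src mn.1 = tgt mn.2 ∧ lam = comp mn.1 mn.2 ∧ d mn.1 = p ∧ d mn.2 = q

namespace PGraph

variable {G : Type u} [Group G] {Q : QLOGroup G} (Λ : PGraph Q)

/-- The prefix order: `λ ⪯ μ` iff `μ = λμ'` for some `μ'`. -/
def PrefixLe (lam mu : Λ.Mor) : Prop :=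
  ∃ tail, Λ.src lam = Λ.tgt tail ∧ mu = Λ.comp lam tail

/-- The set of minimal common extensions of `μ` and `ν`. -/
def MCE (mu nu : Λ.Mor) : Set Λ.Mor :=
  {lam | Λ.PrefixLe mu lam ∧ Λ.PrefixLe nu lam ∧ Q.IsLub (Λ.d mu) (Λ.d nu) (Λ.d lam)}

/-- `Λ` is finitely aligned if all the sets `MCE(μ,ν)` are finite. -/
def FinitelyAligned : Prop := ∀ mu nu : Λ.Mor, (Λ.MCE mu nu).Finite

/-- A filter of `Λ`: a nonempty subset that is downward closed (F1) and upward
directed (F2) for the prefix order. -/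
def IsGraphFilter (U : Set Λ.Mor) : Prop :=
  U.Nonempty ∧ (∀ mu ∈ U, ∀ lam, Λ.PrefixLe lam mu → lam ∈ U) ∧
    (∀ mu ∈ U, ∀ nu ∈ U, ∃ lam ∈ U, Λ.PrefixLe mu lam ∧ Λ.PrefixLe nu lam)

/-- An ultrafilter of `Λ`: a filter maximal under inclusion. -/
def IsGraphUltrafilter (U : Set Λ.Mor) : Prop :=
  Λ.IsGraphFilter U ∧ ∀ V, Λ.IsGraphFilter V → U ⊆ V → U = V

/-- `λ·U = ⋃_{μ ∈ U} {α : α ⪯ λμ}`. -/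
def actFwd (lam : Λ.Mor) (U : Set Λ.Mor) : Set Λ.Mor :=
  {a | ∃ mu ∈ U, Λ.PrefixLe a (Λ.comp lam mu)}

/-- `λ*·V = {μ : λμ ∈ V}`. -/
def actBwd (lam : Λ.Mor) (V : Set Λ.Mor) : Set Λ.Mor :=
  {mu | Λ.src lam = Λ.tgt mu ∧ Λ.comp lam mu ∈ V}

/-- `(μ,ν)` is a balanced pair: `s(μ) = s(ν)` and `d(μ) = d(ν)`. -/
def Balanced (mu nu : Λ.Mor) : Prop := Λ.src mu = Λ.src nu ∧ Λ.d mu = Λ.d nu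

/-- The pairs `(α,β)` with `να = ξβ ∈ MCE(ν,ξ)`. -/
def MCEpairs (nu xi : Λ.Mor) : Set (Λ.Mor × Λ.Mor) :=
  {p | Λ.src nu = Λ.tgt p.1 ∧ Λ.src xi = Λ.tgt p.2 ∧
    Λ.comp nu p.1 = Λ.comp xi p.2 ∧ Λ.comp nu p.1 ∈ Λ.MCE nu xi}

end PGraph

/-- The set of filters `Λ̂` of `Λ`. -/
def PGraph.FilterPoint {G : Type u} [Group G] {Q : QLOGroup G} (Λ : PGraph Q) : Type :=
  {U : Set Λ.Mor // Λ.IsGraphFilter U}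

/-- The Hilbert space `ℓ²(Λ̂)`. -/
noncomputable abbrev PGraph.FilterSpace {G : Type u} [Group G] {Q : QLOGroup G} (Λ : PGraph Q) :=
  lp (fun _ : Λ.FilterPoint => ℂ) 2

/-- The standard orthonormal basis vector `e_U` of `ℓ²(Λ̂)`. -/
noncomputable def PGraph.basisVec {G : Type u} [Group G] {Q : QLOGroup G} (Λ : PGraph Q)
    (U : Λ.FilterPoint) : Λ.FilterSpace :=
  letI : DecidableEq Λ.FilterPoint := Classical.decEq _
  lp.single 2 U 1

/-!
`T_λ` is a partial isometry permuting basis vectors: it maps `e_U` to `e_{λ·U}` when `s(λ) = r(U)`,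
and `U ↦ λ·U`, `V ↦ λ*·V` are mutually inverse between the filters containing `s(λ)` and those
containing `λ`. Hence `T_λ T_λ*` is diagonal, with `T_λ T_λ* e_U = [λ ∈ U] e_U`, and the identity
reduces, at each filter `U`, to `[ν ∈ U][ξ ∈ U] = #(MCE(ν,ξ) ∩ U)`. A filter meets `MCE(ν,ξ)` at most
once, since two elements of it have the same degree `d ν ∨ d ξ` and a common extension in `U`, so
unique factorisation makes them equal; and it meets it as soon as it contains `ν` and `ξ`, in the
prefix of degree `d ν ∨ d ξ` of a common extension of `ν` and `ξ` in `U`.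
-/

theorem finsum_mem_apply {F α β ι : Type*} [FunLike F α β] [AddCommMonoid β] [AddCommMonoid F]
    [IsZeroApply F α β] [IsAddApply F α β] {s : Set ι} (hs : s.Finite) (f : ι → F) (x : α) :
    (∑ᶠ i ∈ s, f i) x = ∑ᶠ i ∈ s, f i x := by
  rw [finsum_mem_eq_finite_toFinset_sum _ hs, finsum_mem_eq_finite_toFinset_sum _ hs, sum_apply]

theorem finsum_mem_indicator_apply {α M : Type*} [AddCommMonoid M] (s t : Set α) (f : α → M) :
    ∑ᶠ i ∈ s, t.indicator f i = ∑ᶠ i ∈ s ∩ t, f i := by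
  rw [finsum_mem_def, finsum_mem_def, Set.indicator_indicator]

namespace lp

open scoped ComplexConjugate

variable {𝕜 ι : Type*} [RCLike 𝕜] [DecidableEq ι]

theorem ext_single {F : Type*} [AddCommMonoid F] [Module 𝕜 F] [TopologicalSpace F] [T2Space F]
    {f g : ℓ²(ι, 𝕜) →L[𝕜] F} (h : ∀ i, f (lp.single 2 i 1) = g (lp.single 2 i 1)) : f = g :=
  lp.ext_continuousLinearMap ENNReal.ofNat_ne_top fun i => ContinuousLinearMap.ext_ring (h i)

theorem adjoint_single_apply (A : ℓ²(ι, 𝕜) →L[𝕜] ℓ²(ι, 𝕜)) (i j : ι) :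
    A.adjoint (lp.single 2 i 1) j = conj (A (lp.single 2 j 1) i) := by
  have h := lp.inner_single_left (𝕜 := 𝕜) j (1 : 𝕜) (A.adjoint (lp.single 2 i 1))
  rw [ContinuousLinearMap.adjoint_inner_right, ← inner_conj_symm, lp.inner_single_left] at h
  simpa using h.symm

end lp

namespace QLOGroup

variable {G : Type u} [Group G] {Q : QLOGroup G}

theorem IsLub.unique {p q s s' : G} (h : Q.IsLub p q s) (h' : Q.IsLub p q s') : s = s' := by
  have hle : s⁻¹ * s' ∈ Q.P := h.2.2.2 s' h'.1 h'.2.1 h'.2.2.1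
  have hge : s'⁻¹ * s ∈ Q.P := h'.2.2.2 s h.1 h.2.1 h.2.2.1
  have : s⁻¹ * s' = 1 := Q.eq_one_of_mem_inv_mem _ hle (by rwa [mul_inv_rev, inv_inv])
  rwa [inv_mul_eq_one] at this

end QLOGroup

namespace PGraph

variable {G : Type u} [Group G] {Q : QLOGroup G} {Λ : PGraph Q}

theorem PrefixLe.refl (lam : Λ.Mor) : Λ.PrefixLe lam lam :=
  ⟨Λ.ident (Λ.src lam), (Λ.tgt_ident _).symm, (Λ.comp_id lam).symm⟩

theorem prefixLe_comp {lam mu : Λ.Mor} (h : Λ.src lam = Λ.tgt mu) :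
    Λ.PrefixLe lam (Λ.comp lam mu) :=
  ⟨mu, h, rfl⟩

theorem PrefixLe.trans {a b c : Λ.Mor} (hab : Λ.PrefixLe a b) (hbc : Λ.PrefixLe b c) :
    Λ.PrefixLe a c := by
  obtain ⟨s, hs, rfl⟩ := hab
  obtain ⟨t, ht, rfl⟩ := hbc
  have hst : Λ.src s = Λ.tgt t := (Λ.src_comp a s hs).symm.trans ht
  exact ⟨Λ.comp s t, (Λ.tgt_comp s t hst).symm ▸ hs, Λ.comp_assoc a s t hs hst⟩

theorem PrefixLe.tgt_eq {a b : Λ.Mor} (h : Λ.PrefixLe a b) : Λ.tgt b = Λ.tgt a := by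
  obtain ⟨t, ht, rfl⟩ := h
  exact Λ.tgt_comp a t ht

theorem PrefixLe.d_le {a b : Λ.Mor} (h : Λ.PrefixLe a b) : Q.le (Λ.d a) (Λ.d b) := by
  obtain ⟨t, ht, rfl⟩ := h
  show (Λ.d a)⁻¹ * Λ.d (Λ.comp a t) ∈ Q.P
  rw [Λ.d_comp a t ht, inv_mul_cancel_left]
  exact Λ.d_mem t

theorem PrefixLe.comp_left {lam mu rho : Λ.Mor} (h : Λ.src lam = Λ.tgt mu)
    (hmr : Λ.PrefixLe mu rho) : Λ.PrefixLe (Λ.comp lam mu) (Λ.comp lam rho) := by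
  obtain ⟨t, ht, rfl⟩ := hmr
  exact ⟨t, (Λ.src_comp lam mu h).symm ▸ ht, (Λ.comp_assoc lam mu t h ht).symm⟩

theorem comp_left_cancel {lam a b : Λ.Mor} (ha : Λ.src lam = Λ.tgt a)
    (hb : Λ.src lam = Λ.tgt b) (h : Λ.comp lam a = Λ.comp lam b) : a = b := by
  have hd : Λ.d a = Λ.d b := by
    have := Λ.d_comp lam a ha
    rw [h, Λ.d_comp lam b hb] at this
    exact (mul_left_cancel this).symm
  obtain ⟨_, _, huniq⟩ := Λ.factorisation (Λ.comp lam a) (Λ.d lam) (Λ.d a)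
    (Λ.d_mem lam) (Λ.d_mem a) (Λ.d_comp lam a ha)
  exact congrArg Prod.snd
    ((huniq (lam, a) ⟨ha, rfl, rfl, rfl⟩).trans (huniq (lam, b) ⟨hb, h, rfl, hd.symm⟩).symm)

theorem prefixLe_of_comp_prefixLe_comp {lam mu rho : Λ.Mor} (hmu : Λ.src lam = Λ.tgt mu)
    (hrho : Λ.src lam = Λ.tgt rho) (h : Λ.PrefixLe (Λ.comp lam mu) (Λ.comp lam rho)) :
    Λ.PrefixLe mu rho := by
  obtain ⟨t, ht, hcomp⟩ := h
  have hst : Λ.src mu = Λ.tgt t := (Λ.src_comp lam mu hmu).symm.trans ht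
  refine ⟨t, hst, comp_left_cancel hrho ?_ ?_⟩
  · rw [Λ.tgt_comp mu t hst]; exact hmu
  · rw [hcomp, Λ.comp_assoc lam mu t hmu hst]

theorem eq_ident_of_d_eq_one {t : Λ.Mor} (h : Λ.d t = 1) : t = Λ.ident (Λ.tgt t) := by
  obtain ⟨_, _, huniq⟩ := Λ.factorisation t 1 1 Q.one_mem Q.one_mem (by rw [h, one_mul])
  have h1 := huniq (Λ.ident (Λ.tgt t), t)
    ⟨by rw [Λ.src_ident], (Λ.id_comp t).symm, Λ.d_ident _, h⟩
  have h2 := huniq (t, Λ.ident (Λ.src t))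
    ⟨by rw [Λ.tgt_ident], (Λ.comp_id t).symm, h, Λ.d_ident _⟩
  exact (congrArg Prod.fst (h1.trans h2.symm)).symm

theorem PrefixLe.antisymm {a b : Λ.Mor} (hab : Λ.PrefixLe a b) (hba : Λ.PrefixLe b a) :
    a = b := by
  obtain ⟨s, hs, rfl⟩ := hab
  have hds : Λ.d s = 1 := by
    have hinv : (Λ.d (Λ.comp a s))⁻¹ * Λ.d a ∈ Q.P := hba.d_le
    rw [Λ.d_comp a s hs, mul_inv_rev, mul_assoc, inv_mul_cancel, mul_one] at hinv
    exact Q.eq_one_of_mem_inv_mem _ (Λ.d_mem s) hinv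
  rw [eq_ident_of_d_eq_one hds, ← hs, Λ.comp_id]

theorem prefixLe_of_d_le {nu lam mu : Λ.Mor} (hnu : Λ.PrefixLe nu mu)
    (hlam : Λ.PrefixLe lam mu) (hd : Q.le (Λ.d nu) (Λ.d lam)) : Λ.PrefixLe nu lam := by
  obtain ⟨t, ht, hmu⟩ := hlam
  obtain ⟨⟨a, b⟩, ⟨hab, hlam_eq, hda, hdb⟩, -⟩ := Λ.factorisation lam (Λ.d nu)
    ((Λ.d nu)⁻¹ * Λ.d lam) (Λ.d_mem nu) hd (by rw [mul_inv_cancel_left])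
  obtain ⟨_, _, huniq⟩ := Λ.factorisation mu (Λ.d nu) ((Λ.d nu)⁻¹ * Λ.d mu)
    (Λ.d_mem nu) hnu.d_le (by rw [mul_inv_cancel_left])
  obtain ⟨s, hs, hmus⟩ := hnu
  have hbt : Λ.src b = Λ.tgt t := (Λ.src_comp a b hab).symm.trans (hlam_eq ▸ ht)
  -- `μ = ν s` and `μ = a (b t)` are both factorisations of `μ` at degree `d ν`.
  have h1 := huniq (nu, s) ⟨hs, hmus, rfl, by rw [hmus, Λ.d_comp nu s hs, inv_mul_cancel_left]⟩
  have h2 := huniq (a, Λ.comp b t)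
    ⟨(Λ.tgt_comp b t hbt).symm ▸ hab, by rw [← Λ.comp_assoc a b t hab hbt, ← hlam_eq, hmu], hda,
      by rw [Λ.d_comp b t hbt, hmu, Λ.d_comp lam t ht, hdb, mul_assoc]⟩
  obtain rfl : nu = a := congrArg Prod.fst (h1.trans h2.symm)
  exact ⟨b, hab, hlam_eq⟩

theorem mem_actFwd_self {lam : Λ.Mor} {U : Set Λ.Mor} (hv : Λ.ident (Λ.src lam) ∈ U) :
    lam ∈ Λ.actFwd lam U :=
  ⟨Λ.ident (Λ.src lam), hv, (Λ.comp_id lam).symm ▸ PrefixLe.refl lam⟩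

theorem ident_src_mem_actBwd {lam : Λ.Mor} {U : Set Λ.Mor} (hlam : lam ∈ U) :
    Λ.ident (Λ.src lam) ∈ Λ.actBwd lam U :=
  ⟨(Λ.tgt_ident _).symm, (Λ.comp_id lam).symm ▸ hlam⟩

namespace IsGraphFilter

variable {U : Set Λ.Mor} (hU : Λ.IsGraphFilter U)
include hU

theorem mem_of_prefixLe {a b : Λ.Mor} (hb : b ∈ U) (hab : Λ.PrefixLe a b) : a ∈ U :=
  hU.2.1 b hb a hab

theorem tgt_eq_of_ident_mem {v : Λ.Obj} (hv : Λ.ident v ∈ U) {mu : Λ.Mor} (hmu : mu ∈ U) :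
    Λ.tgt mu = v := by
  obtain ⟨rho, -, hmr, hvr⟩ := hU.2.2 mu hmu (Λ.ident v) hv
  rw [← hmr.tgt_eq, hvr.tgt_eq, Λ.tgt_ident]

theorem actFwd {lam : Λ.Mor} (hv : Λ.ident (Λ.src lam) ∈ U) :
    Λ.IsGraphFilter (Λ.actFwd lam U) := by
  refine ⟨⟨lam, mem_actFwd_self hv⟩, ?_, ?_⟩
  · rintro a ⟨mu, hmu, hamu⟩ b hba
    exact ⟨mu, hmu, hba.trans hamu⟩
  · rintro a ⟨mu, hmu, hamu⟩ b ⟨mu', hmu', hbmu'⟩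
    obtain ⟨rho, hrho, hmr, hmr'⟩ := hU.2.2 mu hmu mu' hmu'
    refine ⟨Λ.comp lam rho, ⟨rho, hrho, PrefixLe.refl _⟩, ?_, ?_⟩
    · exact hamu.trans (hmr.comp_left (hU.tgt_eq_of_ident_mem hv hmu).symm)
    · exact hbmu'.trans (hmr'.comp_left (hU.tgt_eq_of_ident_mem hv hmu').symm)

theorem actBwd {lam : Λ.Mor} (hlam : lam ∈ U) : Λ.IsGraphFilter (Λ.actBwd lam U) := by
  refine ⟨⟨Λ.ident (Λ.src lam), ident_src_mem_actBwd hlam⟩, ?_, ?_⟩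
  · rintro mu ⟨hmu, hmuU⟩ a ham
    have ha : Λ.src lam = Λ.tgt a := hmu.trans ham.tgt_eq
    exact ⟨ha, hU.mem_of_prefixLe hmuU (ham.comp_left ha)⟩
  · rintro mu ⟨hmu, hmuU⟩ nu ⟨hnu, hnuU⟩
    obtain ⟨rho, hrho, hmr, hnr⟩ := hU.2.2 _ hmuU _ hnuU
    obtain ⟨sig, hsig, rfl⟩ := (prefixLe_comp hmu).trans hmr
    exact ⟨sig, ⟨hsig, hrho⟩, prefixLe_of_comp_prefixLe_comp hmu hsig hmr,
      prefixLe_of_comp_prefixLe_comp hnu hsig hnr⟩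

theorem actFwd_actBwd {lam : Λ.Mor} (hlam : lam ∈ U) : Λ.actFwd lam (Λ.actBwd lam U) = U := by
  ext a
  constructor
  · rintro ⟨mu, ⟨-, hmuU⟩, hamu⟩
    exact hU.mem_of_prefixLe hmuU hamu
  · intro ha
    obtain ⟨rho, hrho, har, hlr⟩ := hU.2.2 a ha lam hlam
    obtain ⟨sig, hsig, rfl⟩ := hlr
    exact ⟨sig, ⟨hsig, hrho⟩, har⟩

theorem actBwd_actFwd {lam : Λ.Mor} (hv : Λ.ident (Λ.src lam) ∈ U) :
    Λ.actBwd lam (Λ.actFwd lam U) = U := by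
  ext mu
  constructor
  · rintro ⟨hmu, rho, hrho, hcr⟩
    exact hU.mem_of_prefixLe hrho
      (prefixLe_of_comp_prefixLe_comp hmu (hU.tgt_eq_of_ident_mem hv hrho).symm hcr)
  · intro hmu
    exact ⟨(hU.tgt_eq_of_ident_mem hv hmu).symm, mu, hmu, PrefixLe.refl _⟩

theorem actFwd_eq_iff {lam : Λ.Mor} (hv : Λ.ident (Λ.src lam) ∈ U) {V : Set Λ.Mor}
    (hV : Λ.IsGraphFilter V) : Λ.actFwd lam U = V ↔ lam ∈ V ∧ U = Λ.actBwd lam V := by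
  constructor
  · rintro rfl
    exact ⟨mem_actFwd_self hv, (hU.actBwd_actFwd hv).symm⟩
  · rintro ⟨hlam, rfl⟩
    exact hV.actFwd_actBwd hlam

theorem eq_of_mem_MCE {nu xi a b : Λ.Mor} (ha : a ∈ Λ.MCE nu xi) (hb : b ∈ Λ.MCE nu xi)
    (haU : a ∈ U) (hbU : b ∈ U) : a = b := by
  have hd : Λ.d a = Λ.d b := ha.2.2.unique hb.2.2
  obtain ⟨rho, -, har, hbr⟩ := hU.2.2 a haU b hbU
  exact (prefixLe_of_d_le har hbr (hd ▸ (PrefixLe.refl b).d_le)).antisymm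
    (prefixLe_of_d_le hbr har (hd ▸ (PrefixLe.refl a).d_le))

theorem exists_mem_MCE {nu xi : Λ.Mor} (hnu : nu ∈ U) (hxi : xi ∈ U) :
    ∃ a ∈ Λ.MCE nu xi, a ∈ U := by
  obtain ⟨rho, hrho, hnr, hxr⟩ := hU.2.2 nu hnu xi hxi
  obtain ⟨s, hsP, hns, hxs, hmin⟩ := Q.lub_exists (Λ.d nu) (Λ.d xi)
    ⟨Λ.d rho, Λ.d_mem rho, hnr.d_le, hxr.d_le⟩
  obtain ⟨⟨a, b⟩, ⟨hab, hrho_eq, hda, -⟩, -⟩ := Λ.factorisation rho s (s⁻¹ * Λ.d rho)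
    hsP (hmin _ (Λ.d_mem rho) hnr.d_le hxr.d_le) (by rw [mul_inv_cancel_left])
  have har : Λ.PrefixLe a rho := hrho_eq ▸ prefixLe_comp hab
  refine ⟨a, ⟨prefixLe_of_d_le hnr har (hda ▸ hns), prefixLe_of_d_le hxr har (hda ▸ hxs),
    hda ▸ ⟨hsP, hns, hxs, hmin⟩⟩, hU.mem_of_prefixLe hrho har⟩

theorem MCE_inter_subsingleton (nu xi : Λ.Mor) : (Λ.MCE nu xi ∩ U).Subsingleton :=
  fun _ ha _ hb => hU.eq_of_mem_MCE ha.1 hb.1 ha.2 hb.2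

theorem MCE_inter_nonempty_iff {nu xi : Λ.Mor} :
    (Λ.MCE nu xi ∩ U).Nonempty ↔ nu ∈ U ∧ xi ∈ U :=
  ⟨fun ⟨_, ha, haU⟩ => ⟨hU.mem_of_prefixLe haU ha.1, hU.mem_of_prefixLe haU ha.2.1⟩,
    fun ⟨hnu, hxi⟩ => hU.exists_mem_MCE hnu hxi⟩

end IsGraphFilter

theorem basisVec_eq_single [DecidableEq Λ.FilterPoint] (U : Λ.FilterPoint) :
    Λ.basisVec U = lp.single 2 U 1 := by
  unfold basisVec
  congr
  exact Subsingleton.elim _ _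

theorem basisVec_apply [DecidableEq Λ.FilterPoint] (U V : Λ.FilterPoint) :
    (Λ.basisVec U : ∀ _ : Λ.FilterPoint, ℂ) V = if V = U then 1 else 0 := by
  rw [basisVec_eq_single, lp.single_apply, Pi.single_apply]

theorem ext_basisVec {A B : Λ.FilterSpace →L[ℂ] Λ.FilterSpace}
    (h : ∀ U, A (Λ.basisVec U) = B (Λ.basisVec U)) : A = B := by
  classical
  exact lp.ext_single fun U => by simpa only [basisVec_eq_single] using h U

theorem adjoint_apply_basisVec_apply (A : Λ.FilterSpace →L[ℂ] Λ.FilterSpace)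
    (U V : Λ.FilterPoint) :
    (A.adjoint (Λ.basisVec U) : ∀ _ : Λ.FilterPoint, ℂ) V =
      starRingEnd ℂ ((A (Λ.basisVec V) : ∀ _ : Λ.FilterPoint, ℂ) U) := by
  classical
  exact lp.adjoint_single_apply A U V

variable (Λ) in
/-- The condition `s(λ) = r(U)` is encoded as `ident (src λ) ∈ U`. -/
def IsFilterRepresentation (T : Λ.Mor → (Λ.FilterSpace →L[ℂ] Λ.FilterSpace)) : Prop :=
  ∀ lam : Λ.Mor,
    (∀ U : Λ.FilterPoint, Λ.ident (Λ.src lam) ∈ U.val →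
      ∀ h : Λ.IsGraphFilter (Λ.actFwd lam U.val),
        T lam (Λ.basisVec U) = Λ.basisVec ⟨Λ.actFwd lam U.val, h⟩) ∧
    (∀ U : Λ.FilterPoint, Λ.ident (Λ.src lam) ∉ U.val → T lam (Λ.basisVec U) = 0)

namespace IsFilterRepresentation

open ContinuousLinearMap

variable {T : Λ.Mor → (Λ.FilterSpace →L[ℂ] Λ.FilterSpace)} (hT : Λ.IsFilterRepresentation T)
include hT

theorem apply_basisVec {lam : Λ.Mor} {U : Λ.FilterPoint} (hv : Λ.ident (Λ.src lam) ∈ U.val) :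
    T lam (Λ.basisVec U) = Λ.basisVec ⟨Λ.actFwd lam U.val, U.2.actFwd hv⟩ :=
  (hT lam).1 U hv _

open scoped Classical in
theorem apply_basisVec_apply (lam : Λ.Mor) (U V : Λ.FilterPoint) :
    (T lam (Λ.basisVec V) : ∀ _ : Λ.FilterPoint, ℂ) U =
      if lam ∈ U.val ∧ V.val = Λ.actBwd lam U.val then 1 else 0 := by
  by_cases hv : Λ.ident (Λ.src lam) ∈ V.val
  · rw [hT.apply_basisVec hv]
    exact (basisVec_apply _ _).trans
      (if_congr (Subtype.ext_iff.trans (eq_comm.trans (V.2.actFwd_eq_iff hv U.2))) rfl rfl)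
  · rw [(hT lam).2 V hv, if_neg]
    · rfl
    · rintro ⟨hlam, hV⟩
      exact hv (hV ▸ ident_src_mem_actBwd hlam)

theorem adjoint_apply_basisVec {lam : Λ.Mor} {U : Λ.FilterPoint} (hlam : lam ∈ U.val) :
    adjoint (T lam) (Λ.basisVec U) = Λ.basisVec ⟨Λ.actBwd lam U.val, U.2.actBwd hlam⟩ := by
  classical
  refine lp.ext (funext fun V => ?_)
  refine ((adjoint_apply_basisVec_apply _ _ _).trans ?_).trans (basisVec_apply _ _).symm
  rw [hT.apply_basisVec_apply]
  simp only [hlam, true_and, apply_ite (starRingEnd ℂ), map_one, map_zero]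
  exact if_congr (Subtype.ext_iff (a1 := V) (a2 := ⟨_, U.2.actBwd hlam⟩)).symm rfl rfl

theorem adjoint_apply_basisVec_of_notMem {lam : Λ.Mor} {U : Λ.FilterPoint} (hlam : lam ∉ U.val) :
    adjoint (T lam) (Λ.basisVec U) = 0 := by
  classical
  refine lp.ext (funext fun V => ?_)
  refine (adjoint_apply_basisVec_apply _ _ _).trans ?_
  rw [hT.apply_basisVec_apply]
  simp [hlam]

theorem comp_adjoint_apply_basisVec (lam : Λ.Mor) (U : Λ.FilterPoint) :
    (T lam ∘L adjoint (T lam)) (Λ.basisVec U) = U.val.indicator (fun _ => Λ.basisVec U) lam := by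
  rw [comp_apply]
  by_cases hlam : lam ∈ U.val
  · rw [hT.adjoint_apply_basisVec hlam, Set.indicator_of_mem hlam,
      hT.apply_basisVec (U := ⟨_, U.2.actBwd hlam⟩) (ident_src_mem_actBwd hlam)]
    exact congrArg Λ.basisVec (Subtype.ext (U.2.actFwd_actBwd hlam))
  · rw [hT.adjoint_apply_basisVec_of_notMem hlam, map_zero, Set.indicator_of_notMem hlam]

theorem comp_adjoint_comp_eq_finsum_MCE (hFA : Λ.FinitelyAligned) (nu xi : Λ.Mor) :
    (T nu ∘L adjoint (T nu)) ∘L (T xi ∘L adjoint (T xi)) =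
      ∑ᶠ lam ∈ Λ.MCE nu xi, T lam ∘L adjoint (T lam) := by
  refine ext_basisVec fun U => ?_
  rw [finsum_mem_apply (hFA nu xi), comp_apply]
  simp only [hT.comp_adjoint_apply_basisVec, finsum_mem_indicator_apply]
  by_cases h : nu ∈ U.val ∧ xi ∈ U.val
  · obtain ⟨lam, hlam⟩ := U.2.MCE_inter_nonempty_iff.2 h
    rw [(U.2.MCE_inter_subsingleton nu xi).eq_singleton_of_mem hlam, finsum_mem_singleton,
      Set.indicator_of_mem h.2, hT.comp_adjoint_apply_basisVec, Set.indicator_of_mem h.1]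
  · rw [Set.not_nonempty_iff_eq_empty.1 (mt U.2.MCE_inter_nonempty_iff.1 h), finsum_mem_empty]
    by_cases hxi : xi ∈ U.val
    · rw [Set.indicator_of_mem hxi, hT.comp_adjoint_apply_basisVec,
        Set.indicator_of_notMem fun hnu => h ⟨hnu, hxi⟩]
    · rw [Set.indicator_of_notMem hxi, map_zero]

end IsFilterRepresentation

end PGraph

/-- For the filter representation `T` on `ℓ²(Λ̂)` and all `ν, ξ ∈ Λ`:
`T_ν T_ν* T_ξ T_ξ* = ∑_{λ ∈ MCE(ν,ξ)} T_λ T_λ*`. -/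
theorem stmt11 {G : Type u} [Group G] {Q : QLOGroup G} (Λ : PGraph Q)
    (hFA : Λ.FinitelyAligned)
    (T : Λ.Mor → (Λ.FilterSpace →L[ℂ] Λ.FilterSpace))
    (hT : ∀ lam : Λ.Mor,
      (∀ U : Λ.FilterPoint, Λ.ident (Λ.src lam) ∈ U.val →
        ∀ h : Λ.IsGraphFilter (Λ.actFwd lam U.val),
          T lam (Λ.basisVec U) = Λ.basisVec ⟨Λ.actFwd lam U.val, h⟩) ∧
      (∀ U : Λ.FilterPoint, Λ.ident (Λ.src lam) ∉ U.val → T lam (Λ.basisVec U) = 0)) :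
    ∀ nu xi : Λ.Mor,
      (T nu ∘L ContinuousLinearMap.adjoint (T nu)) ∘L
          (T xi ∘L ContinuousLinearMap.adjoint (T xi)) =
        ∑ᶠ lam ∈ Λ.MCE nu xi, T lam ∘L ContinuousLinearMap.adjoint (T lam) :=
  PGraph.IsFilterRepresentation.comp_adjoint_comp_eq_finsum_MCE hT hFA
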